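/- Fix β > 0 and C > 0, and let a > 0, b ∈ ℝ and T ≥ 0. Then ∫₀ᵀ 2√β · a · f(a, b, u) du = log( 1 + (a·√(2π)/(2√β))·e^{(b−C)²/(2β)}·(Erf((b−C+βT)/√(2β)) − Erf((b−C)/√(2β))) ). -/

import Mathlib

/-!
The denominator `D` of `f` satisfies `D' = 2√β·a·exp(-(t/2)(2b - 2C + βt))`: differentiating the
`Erf` term produces the Gaussian `exp(-(b - C + βt)²/(2β))`, and the prefactor
`exp((b - C)²/(2β))` completes the square. Hence the integrand is `D'/D`, and since `Erf` is
monotone, `D ≥ D(0) = 2√β > 0` for `a ≥ 0`, `t ≥ 0`, so the integral is `log (D T / D 0)`.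
-/

/-- The error function `Erf x = (2/√π)·∫₀ˣ e^{−u²} du`. -/
noncomputable def Erf (x : ℝ) : ℝ :=
  (2 / Real.sqrt Real.pi) * ∫ u in (0:ℝ)..x, Real.exp (-u ^ 2)

/-- `f(a,b,t)` from the SQF limit-cycle analysis (for parameters `β`, `C`). -/
noncomputable def f (β C a b t : ℝ) : ℝ :=
  Real.exp (-(t / 2) * (2 * b - 2 * C + β * t)) /
    (2 * Real.sqrt β +
      a * Real.exp ((b - C) ^ 2 / (2 * β)) * Real.sqrt (2 * Real.pi) *
        (Erf ((b - C + β * t) / Real.sqrt (2 * β)) -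
         Erf ((b - C) / Real.sqrt (2 * β))))

open Real Set

theorem intervalIntegral.integral_deriv_div_eq_log_div {g g' : ℝ → ℝ} {a b : ℝ}
    (hg : ∀ x ∈ uIcc a b, HasDerivAt g (g' x) x) (hg' : ContinuousOn g' (uIcc a b))
    (hg0 : ∀ x ∈ uIcc a b, g x ≠ 0) :
    ∫ x in a..b, g' x / g x = log (g b / g a) := by
  have hlog : ∀ x ∈ uIcc a b, HasDerivAt (fun y => log (g y)) (g' x / g x) x :=
    fun x hx => (hg x hx).log (hg0 x hx)
  have hint : IntervalIntegrable (fun x => g' x / g x) MeasureTheory.volume a b :=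
    (hg'.div (HasDerivAt.continuousOn hg) hg0).intervalIntegrable
  rw [intervalIntegral.integral_eq_sub_of_hasDerivAt hlog hint,
    log_div (hg0 b right_mem_uIcc) (hg0 a left_mem_uIcc)]

theorem hasDerivAt_Erf (x : ℝ) : HasDerivAt Erf (2 / √π * exp (-x ^ 2)) x := by
  have hcont : Continuous fun u : ℝ => exp (-u ^ 2) := by fun_prop
  exact (intervalIntegral.integral_hasDerivAt_right (hcont.intervalIntegrable _ _)
    (hcont.stronglyMeasurableAtFilter _ _) hcont.continuousAt).const_mul (2 / √π)

theorem monotone_Erf : Monotone Erf :=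
  (strictMono_of_hasDerivAt_pos hasDerivAt_Erf fun _ => by positivity).monotone

noncomputable def sqfDenom (β C a b t : ℝ) : ℝ :=
  2 * √β + a * exp ((b - C) ^ 2 / (2 * β)) * √(2 * π) *
    (Erf ((b - C + β * t) / √(2 * β)) - Erf ((b - C) / √(2 * β)))

theorem f_eq_div_sqfDenom (β C a b t : ℝ) :
    f β C a b t = exp (-(t / 2) * (2 * b - 2 * C + β * t)) / sqfDenom β C a b t :=
  rfl

theorem sqfDenom_zero (β C a b : ℝ) : sqfDenom β C a b 0 = 2 * √β := by
  simp [sqfDenom]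

theorem sqfDenom_pos {β C a b t : ℝ} (hβ : 0 < β) (ha : 0 ≤ a) (ht : 0 ≤ t) :
    0 < sqfDenom β C a b t := by
  have hErf : Erf ((b - C) / √(2 * β)) ≤ Erf ((b - C + β * t) / √(2 * β)) :=
    monotone_Erf (div_le_div_of_nonneg_right (le_add_of_nonneg_right (by positivity))
      (sqrt_nonneg _))
  have hprefactor : 0 ≤ a * exp ((b - C) ^ 2 / (2 * β)) * √(2 * π) := by positivity
  have := sqrt_pos.mpr hβ
  have := mul_nonneg hprefactor (sub_nonneg.mpr hErf)
  unfold sqfDenom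
  linarith

theorem exp_sq_div_mul_exp_neg_sq_div {β : ℝ} (hβ : β ≠ 0) (x t : ℝ) :
    exp (x ^ 2 / (2 * β)) * exp (-(x + β * t) ^ 2 / (2 * β)) =
      exp (-(t / 2) * (2 * x + β * t)) := by
  rw [← exp_add]
  congr 1
  field_simp
  ring

theorem hasDerivAt_sqfDenom {β : ℝ} (hβ : 0 < β) (C a b t : ℝ) :
    HasDerivAt (sqfDenom β C a b)
      (2 * √β * a * exp (-(t / 2) * (2 * b - 2 * C + β * t))) t := by
  set s := √(2 * β)
  have hs : s ^ 2 = 2 * β := sq_sqrt (by positivity)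
  have hconst : √(2 * π) * (2 / √π) * (β / s) = 2 * √β := by
    have hββ := mul_self_sqrt hβ.le
    have := sqrt_pos.mpr hβ
    have := sqrt_pos.mpr pi_pos
    rw [sqrt_mul zero_le_two π, show s = √2 * √β from sqrt_mul zero_le_two β]
    field_simp
    linear_combination -hββ
  have hinner : HasDerivAt (fun t => (b - C + β * t) / s) (β / s) t := by
    simpa using (((hasDerivAt_id t).const_mul β).const_add (b - C)).div_const s
  have hErf := ((hasDerivAt_Erf _).comp t hinner).sub_const (Erf ((b - C) / s))
  refine ((hErf.const_mul (a * exp ((b - C) ^ 2 / (2 * β)) * √(2 * π))).const_add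
    (2 * √β)).congr_deriv ?_
  rw [div_pow, hs, ← neg_div, ← hconst,
    show 2 * b - 2 * C = 2 * (b - C) by ring,
    ← exp_sq_div_mul_exp_neg_sq_div hβ.ne' (b - C) t]
  ring

theorem sqf_rate_decay_integral (β C a b T : ℝ) (hβ : 0 < β)
    (ha : 0 < a) (hT : 0 ≤ T) :
    ∫ u in (0:ℝ)..T, 2 * Real.sqrt β * a * f β C a b u =
      Real.log (1 + (a * Real.sqrt (2 * Real.pi) / (2 * Real.sqrt β)) *
        Real.exp ((b - C) ^ 2 / (2 * β)) *
        (Erf ((b - C + β * T) / Real.sqrt (2 * β)) -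
         Erf ((b - C) / Real.sqrt (2 * β)))) := by
  have hD : ∀ t ∈ uIcc 0 T, sqfDenom β C a b t ≠ 0 := fun t ht =>
    (sqfDenom_pos hβ ha.le (uIcc_of_le hT ▸ ht).1).ne'
  calc ∫ u in (0:ℝ)..T, 2 * √β * a * f β C a b u
      = ∫ u in (0:ℝ)..T,
          2 * √β * a * exp (-(u / 2) * (2 * b - 2 * C + β * u)) / sqfDenom β C a b u := by
        simp only [f_eq_div_sqfDenom, mul_div_assoc]
    _ = log (sqfDenom β C a b T / sqfDenom β C a b 0) :=
        intervalIntegral.integral_deriv_div_eq_log_div (fun t _ => hasDerivAt_sqfDenom hβ C a b t)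
          (by fun_prop) hD
    _ = _ := by
        have := sqrt_pos.mpr hβ
        rw [sqfDenom_zero, sqfDenom, add_div, div_self (by positivity)]
        congr 1
        ring
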